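/- Let A be a finite-dimensional self-injective algebra over a field K such that every indecomposable projective right A-module is uniserial (i.e., A is a selfinjective Nakayama algebra), and suppose every indecomposable projective A-module P does not lie on a short cycle in mod A. Then every indecomposable projective A-module is composition free, i.e., each simple module occurs at most once as a composition factor of P. -/

import Mathlib

/-!
If two composition factors `s (i+1) / s i` and `s (j+1) / s j` of `P` are isomorphic, an
indecomposable projective `N` mapping onto the uniserial module `s (i+1)` also maps onto
`s (j+1)`, by lifting through the common top. Since `N` is uniserial the two kernels are
comparable, so one of `s (i+1)`, `s (j+1)` maps onto the other. As `A` is selfinjective, `P` is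
injective, and this surjection extends to an endomorphism of `P` which is nonzero and, because
a finite length module is not isomorphic to a proper submodule, not invertible: `P` lies on the
short cycle `P → P → P`.
-/

/-- A module is indecomposable if it is nonzero and is not the internal direct sum of two
nonzero submodules. -/
def IsIndecomposable (R : Type*) [Ring R] (M : Type*) [AddCommGroup M] [Module R M] :
    Prop :=
  Nontrivial M ∧ ∀ p q : Submodule R M, IsCompl p q → p = ⊥ ∨ q = ⊥

/-- A module is uniserial if its submodules form a chain. -/
def IsUniserialModule (R : Type*) [Ring R] (M : Type*) [AddCommGroup M] [Module R M] :
    Prop :=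
  ∀ p q : Submodule R M, p ≤ q ∨ q ≤ p

/-- The `i`-th composition factor of a composition series of submodules. -/
abbrev csFactor {R M : Type*} [Ring R] [AddCommGroup M] [Module R M]
    (s : CompositionSeries (Submodule R M)) (i : Fin s.length) :=
  ↥(s i.succ) ⧸ Submodule.comap (s i.succ).subtype (s i.castSucc)

/-- A module is composition free if all its simple composition factors occur with
multiplicity one, i.e. the factors of any composition series are pairwise
non-isomorphic. -/
def IsCompositionFree (R : Type*) [Ring R] (M : Type*) [AddCommGroup M] [Module R M] :
    Prop :=
  ∀ s : CompositionSeries (Submodule R M), s 0 = ⊥ → s (Fin.last _) = ⊤ →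
    ∀ i j : Fin s.length, i ≠ j → IsEmpty (csFactor s i ≃ₗ[R] csFactor s j)

/-- `M` lies on a short cycle `M → Y → M` of nonzero non-isomorphisms between
indecomposable finite-dimensional modules. -/
def LiesOnShortCycle (R : Type*) [Ring R] (M : Type v) [AddCommGroup M] [Module R M] :
    Prop :=
  ∃ Y : ModuleCat.{v} R, Module.Finite R Y ∧ IsIndecomposable R Y ∧
    ∃ (f : M →ₗ[R] Y) (g : Y →ₗ[R] M), f ≠ 0 ∧ g ≠ 0 ∧
      ¬Function.Bijective f ∧ ¬Function.Bijective g

section Uniserial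

variable {R M : Type*} [Ring R] [AddCommGroup M] [Module R M]

theorem IsUniserialModule.submodule (hM : IsUniserialModule R M) (W : Submodule R M) :
    IsUniserialModule R W := fun p q =>
  (hM (p.map W.subtype) (q.map W.subtype)).imp
    (Submodule.map_le_map_iff_of_injective W.injective_subtype p q).mp
    (Submodule.map_le_map_iff_of_injective W.injective_subtype q p).mp

theorem IsUniserialModule.eq_top_or_eq_top_of_sup_eq_top (hM : IsUniserialModule R M)
    {p q : Submodule R M} (h : p ⊔ q = ⊤) : p = ⊤ ∨ q = ⊤ :=
  (hM p q).symm.imp (fun hqp => by rwa [sup_eq_left.mpr hqp] at h)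
    (fun hpq => by rwa [sup_eq_right.mpr hpq] at h)

theorem IsUniserialModule.exists_surjective_lift (hM : IsUniserialModule R M)
    {Q : Type*} [AddCommGroup Q] [Module R Q] [Module.Projective R Q]
    {W : Submodule R M} (hW : W ≠ ⊤) {g : Q →ₗ[R] M ⧸ W} (hg : Function.Surjective g) :
    ∃ l : Q →ₗ[R] M, Function.Surjective l := by
  obtain ⟨l, hl⟩ := Module.projective_lifting_property W.mkQ g W.mkQ_surjective
  have hWl : W ⊔ LinearMap.range l = ⊤ := by
    rw [← Submodule.map_mkQ_eq_top, ← LinearMap.range_comp, hl, LinearMap.range_eq_top.mpr hg]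
  exact ⟨l, LinearMap.range_eq_top.mp ((hM.eq_top_or_eq_top_of_sup_eq_top hWl).resolve_left hW)⟩

end Uniserial

section ProjectiveCover

variable {R F V : Type*} [Ring R] [AddCommGroup F] [Module R F] [AddCommGroup V] [Module R V]

theorem Submodule.map_subtype_sup_map_subtype_of_isCompl {N : Submodule R F}
    {p q : Submodule R N} (h : IsCompl p q) : p.map N.subtype ⊔ q.map N.subtype = N := by
  rw [← Submodule.map_sup, h.sup_eq_top, Submodule.map_top, Submodule.range_subtype]

/-- A minimal direct summand of `F` still mapping onto `V` is indecomposable: a splitting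
`N = X ⊕ Y` gives `g X ⊔ g Y = V`, so by uniseriality `X` or `Y` already maps onto `V`. -/
theorem exists_isIndecomposable_isCompl_map_eq_top [IsArtinian R F] [Nontrivial V]
    (hV : IsUniserialModule R V) {g : F →ₗ[R] V} (hg : Function.Surjective g) :
    ∃ N : Submodule R F, (∃ q, IsCompl N q) ∧ N.map g = ⊤ ∧ IsIndecomposable R N := by
  obtain ⟨N, ⟨⟨q, hNq⟩, hgN⟩, hmin⟩ :=
    wellFounded_lt.has_min {N : Submodule R F | (∃ q, IsCompl N q) ∧ N.map g = ⊤}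
      ⟨⊤, ⟨⊥, isCompl_top_bot⟩, by rw [Submodule.map_top, LinearMap.range_eq_top.mpr hg]⟩
  have summand_eq_bot : ∀ p p' : Submodule R N, IsCompl p p' →
      (p.map N.subtype).map g = ⊤ → p' = ⊥ := by
    intro p p' hpp' hgp
    have hdisj := Submodule.disjoint_map N.injective_subtype hpp'.disjoint
    have hsup := Submodule.map_subtype_sup_map_subtype_of_isCompl hpp'
    have hcompl : IsCompl (p.map N.subtype) (p'.map N.subtype ⊔ q) :=
      hdisj.isCompl_sup_right_of_isCompl_sup_left (by rwa [hsup])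
    have hpN : p.map N.subtype = N :=
      (Submodule.map_subtype_le N p).eq_of_not_lt (hmin _ ⟨⟨_, hcompl⟩, hgp⟩)
    have hp' : p'.map N.subtype = ⊥ :=
      hdisj.symm.eq_bot_of_le ((Submodule.map_subtype_le N p').trans hpN.ge)
    exact Submodule.map_injective_of_injective N.injective_subtype
      (hp'.trans (Submodule.map_bot _).symm)
  refine ⟨N, ⟨q, hNq⟩, hgN, Submodule.nontrivial_iff_ne_bot.mpr ?_, fun p p' hpp' => ?_⟩
  · rintro rfl
    exact bot_ne_top (Submodule.map_bot g ▸ hgN)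
  · have hsup : (p.map N.subtype).map g ⊔ (p'.map N.subtype).map g = ⊤ := by
      rw [← Submodule.map_sup, Submodule.map_subtype_sup_map_subtype_of_isCompl hpp', hgN]
    rcases hV.eq_top_or_eq_top_of_sup_eq_top hsup with hgp | hgp'
    · exact Or.inr (summand_eq_bot p p' hpp' hgp)
    · exact Or.inl (summand_eq_bot p' p hpp'.symm hgp')

universe v in
theorem exists_isIndecomposable_projective_surjective [IsArtinianRing R] [Small.{v} R]
    [Module.Finite R V] [Nontrivial V] (hV : IsUniserialModule R V) :
    ∃ (N : Type v) (_ : AddCommGroup N) (_ : Module R N), Module.Finite R N ∧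
      Module.Projective R N ∧ IsIndecomposable R N ∧ ∃ g : N →ₗ[R] V, Function.Surjective g := by
  obtain ⟨n, f, hf⟩ := Module.Finite.exists_fin' R V
  let e := Shrink.linearEquiv.{v} R (Fin n → R)
  obtain ⟨N, ⟨q, hNq⟩, hgN, hN⟩ :=
    exists_isIndecomposable_isCompl_map_eq_top hV (g := f ∘ₗ e.toLinearMap) (hf.comp e.surjective)
  refine ⟨N, _, _, Module.Finite.of_surjective _ (Submodule.projectionOnto_surjective hNq),
    .of_split N.subtype _ (Submodule.projectionOnto_comp_subtype hNq), hN,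
    (f ∘ₗ e.toLinearMap) ∘ₗ N.subtype, ?_⟩
  rw [← LinearMap.range_eq_top, LinearMap.range_comp, Submodule.range_subtype, hgN]

end ProjectiveCover

section Endomorphisms

variable {R M X Y : Type*} [Ring R] [AddCommGroup M] [Module R M] [AddCommGroup X] [Module R X]
  [AddCommGroup Y] [Module R Y]

theorem Module.Baer.of_retract (hM : Module.Baer R M) (i : X →ₗ[R] M) (r : M →ₗ[R] X)
    (hri : r ∘ₗ i = LinearMap.id) : Module.Baer R X := fun I g => by
  obtain ⟨g', hg'⟩ := hM I (i ∘ₗ g)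
  refine ⟨r ∘ₗ g', fun x hx => ?_⟩
  simpa using (congrArg r (hg' x hx)).trans (LinearMap.congr_fun hri (g ⟨x, hx⟩))

theorem Module.Baer.of_projective (hR : Module.Baer R R) (P : Type*) [AddCommGroup P]
    [Module R P] [Module.Finite R P] [Module.Projective R P] : Module.Baer R P := by
  obtain ⟨n, f, hf⟩ := Module.Finite.exists_fin' R P
  obtain ⟨s, hs⟩ := Module.projective_lifting_property f LinearMap.id hf
  have : Module.Injective R R := hR.injective
  exact (Module.Baer.of_injective (Module.Injective.pi R fun _ : Fin n => R)).of_retract s f hs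

theorem exists_surjective_of_ker_le {π : M →ₗ[R] X} {l : M →ₗ[R] Y}
    (hπ : Function.Surjective π) (hl : Function.Surjective l)
    (hker : LinearMap.ker π ≤ LinearMap.ker l) : ∃ ρ : X →ₗ[R] Y, Function.Surjective ρ := by
  have hlift : Function.Surjective ((LinearMap.ker π).liftQ l hker) := by
    rw [← LinearMap.range_eq_top, Submodule.range_liftQ, LinearMap.range_eq_top]
    exact hl
  refine ⟨(LinearMap.ker π).liftQ l hker ∘ₗ (π.quotKerEquivOfSurjective hπ).symm.toLinearMap,
    ?_⟩
  rw [LinearMap.coe_comp]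
  exact hlift.comp (LinearEquiv.surjective _)

/-- An injective endomorphism of the artinian module `q` is onto, so `q` embeds in no proper
submodule. -/
theorem Submodule.eq_of_le_of_linearEquiv [IsArtinian R M] {p q : Submodule R M} (hpq : p ≤ q)
    (e : q ≃ₗ[R] p) : p = q := by
  have hsurj := IsArtinian.surjective_of_injective_endomorphism
    (Submodule.inclusion hpq ∘ₗ e.toLinearMap)
    ((Submodule.inclusion_injective hpq).comp e.injective)
  refine hpq.antisymm fun x hx => ?_
  obtain ⟨y, hy⟩ := hsurj ⟨x, hx⟩
  have hxy : ((e y : p) : M) = x := congrArg Subtype.val hy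
  exact hxy ▸ (e y).2

theorem exists_ne_zero_not_bijective_of_surjective (hM : Module.Baer R M) [IsArtinian R M]
    {p q : Submodule R M} (hpq : p < q ∨ q < p) (hq : q ≠ ⊥) {ρ : p →ₗ[R] q}
    (hρ : Function.Surjective ρ) : ∃ h : M →ₗ[R] M, h ≠ 0 ∧ ¬Function.Bijective h := by
  obtain ⟨h, hh⟩ := hM.extension_property p.subtype p.injective_subtype (q.subtype ∘ₗ ρ)
  have hmap : p.map h = q := by
    have := congrArg LinearMap.range hh
    rwa [LinearMap.range_comp, LinearMap.range_comp, Submodule.range_subtype,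
      LinearMap.range_eq_top.mpr hρ, Submodule.map_top, Submodule.range_subtype] at this
  refine ⟨h, fun h0 => hq ?_, fun hbij => ?_⟩
  · rw [← hmap, h0, Submodule.map_zero]
  · let e : p ≃ₗ[R] q := (Submodule.equivMapOfInjective h hbij.1 p).trans (.ofEq _ _ hmap)
    rcases hpq with hlt | hlt
    · exact hlt.ne (Submodule.eq_of_le_of_linearEquiv hlt.le e.symm)
    · exact hlt.ne (Submodule.eq_of_le_of_linearEquiv hlt.le e)

universe v in
theorem liesOnShortCycle_of_ne_zero_of_not_bijective {P : Type v} [AddCommGroup P]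
    [Module R P] [Module.Finite R P] (hP : IsIndecomposable R P) {h : P →ₗ[R] P} (h0 : h ≠ 0)
    (hh : ¬Function.Bijective h) : LiesOnShortCycle R P :=
  ⟨ModuleCat.of R P, ‹_›, hP, h, h, h0, h0, hh, hh⟩

end Endomorphisms

universe v in
theorem small_of_nontrivial_module (K R : Type*) [Field K] [Ring R] [Algebra K R]
    [Module.Finite K R] (M : Type v) [AddCommGroup M] [Module R M] [Nontrivial M] :
    Small.{v} R := by
  let : Module K M := Module.compHom M (algebraMap K R)
  obtain ⟨x, hx⟩ := exists_ne (0 : M)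
  have : Small.{v} K := small_of_injective (smul_left_injective K hx)
  exact Module.Finite.small K R

/-- Let `A` be a finite-dimensional selfinjective Nakayama algebra over a
field `K` (every indecomposable projective right `A`-module is uniserial), and suppose no
indecomposable projective `A`-module lies on a short cycle in `mod A`.  Then every
indecomposable projective `A`-module is composition free. -/
theorem nakayama_projectives_composition_free_of_no_short_cycle
    {K A : Type*} [Field K] [Ring A] [Algebra K A] [FiniteDimensional K A]
    [Module.Injective Aᵐᵒᵖ A]
    (hNak : ∀ (P : Type v) [AddCommGroup P] [Module Aᵐᵒᵖ P],
      Module.Finite Aᵐᵒᵖ P → Module.Projective Aᵐᵒᵖ P → IsIndecomposable Aᵐᵒᵖ P →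
        IsUniserialModule Aᵐᵒᵖ P)
    (hnsc : ∀ (P : Type v) [AddCommGroup P] [Module Aᵐᵒᵖ P],
      Module.Finite Aᵐᵒᵖ P → Module.Projective Aᵐᵒᵖ P → IsIndecomposable Aᵐᵒᵖ P →
        ¬LiesOnShortCycle Aᵐᵒᵖ P) :
    ∀ (P : Type v) [AddCommGroup P] [Module Aᵐᵒᵖ P],
      Module.Finite Aᵐᵒᵖ P → Module.Projective Aᵐᵒᵖ P → IsIndecomposable Aᵐᵒᵖ P →
        IsCompositionFree Aᵐᵒᵖ P := by
  intro P _ _ hfin hproj hP s _ _ i j hij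
  refine ⟨fun e => ?_⟩
  have : IsArtinianRing Aᵐᵒᵖ := IsArtinianRing.of_finite K Aᵐᵒᵖ
  have : IsNoetherianRing Aᵐᵒᵖ := isNoetherian_of_tower K inferInstance
  have : Nontrivial P := hP.1
  have : Small.{v} Aᵐᵒᵖ := small_of_nontrivial_module K Aᵐᵒᵖ P
  have hPuni := hNak P hfin hproj hP
  have hPbaer : Module.Baer Aᵐᵒᵖ P :=
    ((Module.Baer.of_injective ‹Module.Injective Aᵐᵒᵖ A›).of_equiv
      (MulOpposite.opLinearEquiv Aᵐᵒᵖ : A ≃ₗ[Aᵐᵒᵖ] Aᵐᵒᵖ)).of_projective P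
  have hstep (k : Fin s.length) : s k.castSucc < s k.succ := (s.step k).lt
  have : Nontrivial (s i.succ) := Submodule.nontrivial_iff_ne_bot.mpr (ne_bot_of_gt (hstep i))
  obtain ⟨N, _, _, _, _, hN, g, hg⟩ :=
    exists_isIndecomposable_projective_surjective.{v} (hPuni.submodule (s i.succ))
  obtain ⟨l, hl⟩ := (hPuni.submodule (s j.succ)).exists_surjective_lift
    (fun h => (hstep j).not_ge (Submodule.comap_subtype_eq_top.mp h))
    (g := e.toLinearMap ∘ₗ Submodule.mkQ _ ∘ₗ g)
    (e.surjective.comp ((Submodule.mkQ_surjective _).comp hg))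
  obtain ⟨a, b, hab, ρ, hρ⟩ : ∃ a b : Fin s.length,
      (s a.succ < s b.succ ∨ s b.succ < s a.succ) ∧
        ∃ ρ : s a.succ →ₗ[Aᵐᵒᵖ] s b.succ, Function.Surjective ρ := by
    have hij' : s i.succ < s j.succ ∨ s j.succ < s i.succ :=
      (lt_or_gt_of_ne (Fin.succ_injective _ |>.ne hij)).imp (s.strictMono ·) (s.strictMono ·)
    rcases hNak N ‹_› ‹_› hN (LinearMap.ker g) (LinearMap.ker l) with hker | hker
    · exact ⟨i, j, hij', exists_surjective_of_ker_le hg hl hker⟩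
    · exact ⟨j, i, hij'.symm, exists_surjective_of_ker_le hl hg hker⟩
  obtain ⟨h, h0, hh⟩ :=
    exists_ne_zero_not_bijective_of_surjective hPbaer hab (ne_bot_of_gt (hstep b)) hρ
  exact hnsc P hfin hproj hP (liesOnShortCycle_of_ne_zero_of_not_bijective hP h0 hh)
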